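/- Let Γ be a circle with center O and radius r, and let M be a point with M ≠ O and M not on Γ. The negative pedal curve of Γ with respect to M is a conic with focus M, center O, vertices at the two intersections of line MO with Γ, and focal axis along line MO; it is an ellipse if M is inside Γ and a hyperbola if M is outside Γ. -/
import Mathlib


open Metric Real EuclideanGeometry

noncomputable section

abbrev Pt := EuclideanSpace ℝ (Fin 2)

local notation "⟪" x ", " y "⟫" => @inner ℝ _ _ x y

lemma np_perp_iff (P X M : Pt) : ⟪X - P, M - P⟫ = 0 ↔ dist X M = dist X ((2:ℝ) • P - M) := by
  have h1 : X - M = (X - P) - (M - P) := by module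
  have h2 : X - ((2:ℝ) • P - M) = (X - P) + (M - P) := by module
  rw [dist_eq_norm, dist_eq_norm, h1, h2]
  constructor
  · intro h
    exact norm_sub_eq_norm_add (real_inner_comm (X-P) (M-P) ▸ h)
  · intro h
    have h2 : ‖(X-P) - (M-P)‖^2 = ‖(X-P) + (M-P)‖^2 := by rw [h]
    rw [norm_sub_sq_real, norm_add_sq_real] at h2
    linarith

lemma np_line_subsingleton (P M A B : Pt) (hA : ⟪A - P, M - P⟫ ≠ 0) :
    Set.Subsingleton {X : Pt | ⟪X - P, M - P⟫ = 0 ∧ ∃ s : ℝ, X = A + s • (B - A)} := by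
  have key : ∀ s : ℝ, ⟪A + s • (B - A) - P, M - P⟫ =
      ⟪A - P, M - P⟫ + s * ⟪B - A, M - P⟫ := by
    intro s
    rw [show A + s • (B - A) - P = (A - P) + s • (B - A) by module, inner_add_left,
      real_inner_smul_left]
  rintro X₁ ⟨h1, s1, rfl⟩ X₂ ⟨h2, s2, rfl⟩
  rw [key] at h1 h2
  have hc : ⟪B - A, M - P⟫ ≠ 0 := by
    intro h; rw [h, mul_zero, add_zero] at h1; exact hA h1
  have : s1 = s2 := by
    have h3 : (s1 - s2) * ⟪B - A, M - P⟫ = 0 := by ring_nf; linarith [h1, h2]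
    rcases mul_eq_zero.mp h3 with h | h
    · linarith [sub_eq_zero.mp h]
    · exact absurd h hc
  rw [this]

lemma np_solve_param {X C D : Pt} {a b : ℝ} (ha : a ≠ 0) (hab : a + b = 1)
    (h : a • X + b • C = D) : ∃ s : ℝ, X = D + s • (C - D) := by
  refine ⟨-(b/a), ?_⟩
  have hX : X = a⁻¹ • (D - b • C) := by
    rw [← h, add_sub_cancel_right, inv_smul_smul₀ ha]
  rw [hX]
  match_scalars <;> field_simp <;> linarith

lemma np_param_of_sum {A B X : Pt} (h : dist X A + dist X B = dist A B) :
    ∃ s : ℝ, X = A + s • (B - A) := by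
  have w : Wbtw ℝ A X B := dist_add_dist_eq_iff.mp (by rw [dist_comm A X]; exact h)
  obtain ⟨a, b, _, _, hab, hX⟩ := w.mem_segment
  refine ⟨b, ?_⟩
  rw [← hX]
  have : a = 1 - b := by linarith
  subst this; module

lemma np_param_of_abs {A B X : Pt} (hAB : dist A B ≠ 0)
    (h : |dist X A - dist X B| = dist A B) : ∃ s : ℝ, X = A + s • (B - A) := by
  rcases (abs_eq dist_nonneg).mp h with h' | h'
  · have w : Wbtw ℝ X B A := dist_add_dist_eq_iff.mp (by rw [dist_comm B A]; linarith)
    obtain ⟨a, b, _, _, hab, hX⟩ := w.mem_segment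
    have ha : a ≠ 0 := by
      intro h0
      apply hAB
      rw [h0] at hab hX
      simp at hX
      rw [show b = 1 by linarith, one_smul] at hX
      rw [hX]; simp
    obtain ⟨s, hs⟩ := np_solve_param ha hab hX
    exact ⟨1 - s, by rw [hs]; module⟩
  · have w : Wbtw ℝ X A B := dist_add_dist_eq_iff.mp (by linarith)
    obtain ⟨a, b, _, _, hab, hX⟩ := w.mem_segment
    have ha : a ≠ 0 := by
      intro h0
      apply hAB
      rw [h0] at hab hX
      simp at hX
      rw [show b = 1 by linarith, one_smul] at hX
      rw [← hX]; simp
    exact np_solve_param ha hab hX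

lemma np_construct (O M X : Pt) (r : ℝ) (t : ℝ)
    (ht : |t| * dist X ((2:ℝ) • O - M) = 2 * r)
    (hXM : dist X M = |1 - t| * dist X ((2:ℝ) • O - M)) :
    ∃ P : Pt, dist P O = r ∧ ⟪X - P, M - P⟫ = 0 := by
  set M' : Pt := (2:ℝ) • O - M with hM'
  set A : Pt := M' + t • (X - M') with hA
  set P : Pt := ((1:ℝ)/2) • (M + A) with hP
  have h2P : (2:ℝ) • P - M = A := by rw [hP]; module
  refine ⟨P, ?_, ?_⟩
  · have hPO : P - O = (t/2) • (X - M') := by rw [hP, hA, hM']; module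
    rw [dist_eq_norm, hPO, norm_smul]
    have hn : dist X M' = ‖X - M'‖ := dist_eq_norm _ _
    rw [hn] at ht
    rw [Real.norm_eq_abs, abs_div]
    rw [show |(2:ℝ)| = 2 by norm_num]
    linarith [ht]
  · rw [np_perp_iff, h2P]
    have hXA : X - A = (1 - t) • (X - M') := by rw [hA]; module
    rw [dist_eq_norm X A, hXA, norm_smul, Real.norm_eq_abs, ← dist_eq_norm]
    exact hXM

lemma np_vertex (O M V : Pt) (hMO : M ≠ O) (hcol : Collinear ℝ ({M, O, V} : Set Pt)) :
    ∃ t : ℝ, V = M + t • (O - M) := by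
  obtain ⟨v, hv⟩ := (collinear_iff_of_mem (show M ∈ ({M, O, V} : Set Pt) by simp)).mp hcol
  obtain ⟨t₀, ht₀⟩ := hv O (by simp)
  obtain ⟨t₁, ht₁⟩ := hv V (by simp)
  have ht₀0 : t₀ ≠ 0 := by
    intro h
    rw [h, zero_smul] at ht₀
    simp only [vadd_eq_add, zero_add] at ht₀
    exact hMO ht₀.symm
  refine ⟨t₁ / t₀, ?_⟩
  have hOM : O - M = t₀ • v := by rw [ht₀]; simp only [vadd_eq_add]; module
  rw [hOM, smul_smul, div_mul_cancel₀ _ ht₀0, ht₁]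
  simp only [vadd_eq_add]; module

lemma np_dists (O M : Pt) (t : ℝ) :
    dist (M + t • (O - M)) O = |1 - t| * dist M O ∧
    dist (M + t • (O - M)) M = |t| * dist M O ∧
    dist (M + t • (O - M)) ((2:ℝ) • O - M) = |t - 2| * dist M O := by
  have hk : dist M O = ‖M - O‖ := dist_eq_norm _ _
  refine ⟨?_, ?_, ?_⟩
  · rw [dist_eq_norm, show M + t • (O - M) - O = (1 - t) • (M - O) by module, norm_smul,
      Real.norm_eq_abs, hk]
  · rw [dist_eq_norm, show M + t • (O - M) - M = (-t) • (M - O) by module, norm_smul,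
      Real.norm_eq_abs, abs_neg, hk]
  · rw [dist_eq_norm, show M + t • (O - M) - ((2:ℝ) • O - M) = (2 - t) • (M - O) by module,
      norm_smul, Real.norm_eq_abs, show |t - 2| = |2 - t| by rw [abs_sub_comm], hk]

/-- The negative pedal curve of a circle Γ (center O, radius r) w.r.t. M ∉ Γ, M ≠ O,
is the conic with foci M and 2O - M and focal parameter 2r: each line of the family
(through P ∈ Γ, perpendicular to MP) meets the conic at most once (tangency), every
point of the conic lies on such a line, and the vertices (intersections of line MO
with Γ) lie on the conic. It is an ellipse if M is inside Γ, a hyperbola if outside. -/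
theorem negative_pedal_of_circle (O M : Pt) (r : ℝ) (hr : 0 < r)
    (hMO : M ≠ O) (hMΓ : dist M O ≠ r) :
    (dist M O < r →
      (∀ P : Pt, dist P O = r →
        Set.Subsingleton {X : Pt | ⟪X - P, M - P⟫ = 0 ∧
          dist X M + dist X ((2:ℝ) • O - M) = 2 * r}) ∧
      (∀ X : Pt, dist X M + dist X ((2:ℝ) • O - M) = 2 * r →
        ∃ P : Pt, dist P O = r ∧ ⟪X - P, M - P⟫ = 0) ∧
      (∀ V : Pt, dist V O = r → Collinear ℝ ({M, O, V} : Set Pt) →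
        dist V M + dist V ((2:ℝ) • O - M) = 2 * r)) ∧
    (r < dist M O →
      (∀ P : Pt, dist P O = r →
        Set.Subsingleton {X : Pt | ⟪X - P, M - P⟫ = 0 ∧
          |dist X M - dist X ((2:ℝ) • O - M)| = 2 * r}) ∧
      (∀ X : Pt, |dist X M - dist X ((2:ℝ) • O - M)| = 2 * r →
        ∃ P : Pt, dist P O = r ∧ ⟪X - P, M - P⟫ = 0) ∧
      (∀ V : Pt, dist V O = r → Collinear ℝ ({M, O, V} : Set Pt) →
        |dist V M - dist V ((2:ℝ) • O - M)| = 2 * r)) := by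
  have hk0 : 0 < dist M O := dist_pos.mpr hMO
  have hMM' : dist ((2:ℝ) • O - M) M = 2 * dist M O := by
    rw [dist_eq_norm, show (2:ℝ) • O - M - M = (2:ℝ) • (O - M) by module, norm_smul,
      Real.norm_eq_abs, show |(2:ℝ)| = 2 by norm_num, show ‖O - M‖ = dist M O by
        rw [dist_eq_norm, norm_sub_rev]]
  -- common subsingleton ingredients
  have hsub : ∀ P : Pt, dist P O = r → M ≠ P →
      ⟪((2:ℝ) • P - M) - P, M - P⟫ ≠ 0 ∧ dist ((2:ℝ) • P - M) ((2:ℝ) • O - M) = 2 * r := by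
    intro P hP hMP
    constructor
    · have hAP : ((2:ℝ) • P - M) - P = -(M - P) := by module
      rw [hAP, inner_neg_left]
      intro h
      have h' : ⟪M - P, M - P⟫ = 0 := by linarith
      exact hMP (sub_eq_zero.mp (inner_self_eq_zero.mp h'))
    · rw [dist_eq_norm, show ((2:ℝ) • P - M) - ((2:ℝ) • O - M) = (2:ℝ) • (P - O) by module,
        norm_smul, Real.norm_eq_abs, show |(2:ℝ)| = 2 by norm_num, ← dist_eq_norm, hP]
  constructor
  · -- ellipse case
    intro hin
    refine ⟨?_, ?_, ?_⟩
    · -- tangency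
      intro P hP
      have hMP : M ≠ P := fun h => hMΓ (by rw [h]; exact hP)
      obtain ⟨hinner, hAM'⟩ := hsub P hP hMP
      refine (np_line_subsingleton P M ((2:ℝ) • P - M) ((2:ℝ) • O - M) hinner).anti ?_
      rintro X ⟨hperp, hsum⟩
      refine ⟨hperp, np_param_of_sum ?_⟩
      rw [np_perp_iff] at hperp
      rw [hAM', ← hperp]
      exact hsum
    · -- every conic point is on a family line
      intro X hX
      have hXM' : X ≠ (2:ℝ) • O - M := by
        intro h
        rw [h, dist_self, add_zero, hMM'] at hX
        exact hMΓ (by linarith)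
      have hd : 0 < dist X ((2:ℝ) • O - M) := dist_pos.mpr hXM'
      set d := dist X ((2:ℝ) • O - M) with hddef
      have hdle : d ≤ 2 * r := by
        have := dist_nonneg (x := X) (y := M); linarith
      apply np_construct O M X r (2 * r / d)
      · rw [← hddef, abs_div, abs_of_pos hd, abs_of_pos (by linarith : (0:ℝ) < 2 * r)]
        field_simp
      · rw [← hddef]
        have e1 : (1 - 2 * r / d) * d = d - 2 * r := by field_simp
        have e2 : |1 - 2 * r / d| * d = |d - 2 * r| := by
          rw [← e1, abs_mul, abs_of_pos hd]
        rw [e2, abs_of_nonpos (by linarith)]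
        linarith
    · -- vertices
      intro V hV hcol
      obtain ⟨t, rfl⟩ := np_vertex O M V hMO hcol
      obtain ⟨e1, e2, e3⟩ := np_dists O M t
      rw [e1] at hV
      rw [e2, e3]
      set k := dist M O with hkdef
      rcases le_or_gt t 1 with h | h
      · rw [abs_of_nonneg (by linarith : (0:ℝ) ≤ 1 - t)] at hV
        have htneg : t < 0 := by nlinarith
        rw [abs_of_neg htneg, abs_of_neg (by linarith : t - 2 < 0)]
        linear_combination 2 * hV
      · rw [abs_of_neg (by linarith : 1 - t < 0)] at hV
        have htgt : 2 < t := by nlinarith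
        rw [abs_of_pos (by linarith : (0:ℝ) < t), abs_of_pos (by linarith : (0:ℝ) < t - 2)]
        linear_combination 2 * hV
  · -- hyperbola case
    intro hout
    refine ⟨?_, ?_, ?_⟩
    · intro P hP
      have hMP : M ≠ P := fun h => hMΓ (by rw [h]; exact hP)
      obtain ⟨hinner, hAM'⟩ := hsub P hP hMP
      refine (np_line_subsingleton P M ((2:ℝ) • P - M) ((2:ℝ) • O - M) hinner).anti ?_
      rintro X ⟨hperp, habs⟩
      refine ⟨hperp, np_param_of_abs (by rw [hAM']; positivity) ?_⟩
      rw [np_perp_iff] at hperp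
      rw [hAM', ← hperp]
      exact habs
    · intro X hX
      have hXM' : X ≠ (2:ℝ) • O - M := by
        intro h
        rw [h, dist_self, sub_zero, hMM', abs_of_nonneg (by positivity)] at hX
        exact hMΓ (by linarith)
      have hd : 0 < dist X ((2:ℝ) • O - M) := dist_pos.mpr hXM'
      set d := dist X ((2:ℝ) • O - M) with hddef
      rcases (abs_eq (by linarith : (0:ℝ) ≤ 2 * r)).mp hX with h' | h'
      · -- dist X M = d + 2r : far branch
        apply np_construct O M X r (-(2 * r / d))
        · rw [← hddef, abs_neg, abs_div, abs_of_pos hd,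
            abs_of_pos (by linarith : (0:ℝ) < 2 * r)]
          field_simp
        · rw [← hddef]
          have e1 : (1 - -(2 * r / d)) * d = d + 2 * r := by field_simp <;> ring
          have e2 : |1 - -(2 * r / d)| * d = |d + 2 * r| := by
            rw [← e1, abs_mul, abs_of_pos hd]
          rw [e2, abs_of_nonneg (by linarith)]
          linarith
      · -- dist X M = d - 2r : near branch
        have hdge : 2 * r ≤ d := by
          have := dist_nonneg (x := X) (y := M); linarith
        apply np_construct O M X r (2 * r / d)
        · rw [← hddef, abs_div, abs_of_pos hd, abs_of_pos (by linarith : (0:ℝ) < 2 * r)]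
          field_simp
        · rw [← hddef]
          have e1 : (1 - 2 * r / d) * d = d - 2 * r := by field_simp
          have e2 : |1 - 2 * r / d| * d = |d - 2 * r| := by
            rw [← e1, abs_mul, abs_of_pos hd]
          rw [e2, abs_of_nonneg (by linarith)]
          linarith
    · intro V hV hcol
      obtain ⟨t, rfl⟩ := np_vertex O M V hMO hcol
      obtain ⟨e1, e2, e3⟩ := np_dists O M t
      rw [e1] at hV
      rw [e2, e3]
      set k := dist M O with hkdef
      rcases le_or_gt t 1 with h | h
      · rw [abs_of_nonneg (by linarith : (0:ℝ) ≤ 1 - t)] at hV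
        have htpos : 0 < t := by nlinarith
        rw [abs_of_pos htpos, abs_of_neg (by linarith : t - 2 < 0)]
        rw [abs_of_nonpos (by nlinarith : t * k - -(t - 2) * k ≤ 0)]
        linear_combination 2 * hV
      · rw [abs_of_neg (by linarith : 1 - t < 0)] at hV
        have htlt : t < 2 := by nlinarith
        rw [abs_of_pos (by linarith : (0:ℝ) < t), abs_of_neg (by linarith : t - 2 < 0)]
        rw [abs_of_nonneg (by nlinarith : (0:ℝ) ≤ t * k - -(t - 2) * k)]
        linear_combination 2 * hV
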